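/- arXiv:2007.08787 — 4 statements merged into one kernel-verified Lean document; each statement's English description precedes it below -/
import Mathlib

section
/- (Fine–Wilf Periodicity Lemma, Lemma 1 of the paper.) Let X be a string and let a, b be positive integers that are both period lengths of X. If |X| ≥ a + b − gcd(a,b), then gcd(a,b) is also a period length of X. -/
/-!
Subtractive Euclid. If `b < a` are periods of `X` and `|X| ≥ a + b - gcd a b`, the prefix `Y` of
`X` of length `|X| - b` has periods `a - b` and `b`, and is long enough for induction to give it
the period `g = gcd a b`. Since `Y` covers a full period `b` of `X` and `g ∣ b`, every letter of `X`
is the letter of `Y` at its residue modulo `b`, and residues modulo `b` respect congruence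
modulo `g`; so `g` is a period of all of `X`.
-/

/-- An integer `q ≥ 1` is a period length of a string `X` (given as a list) if
`X[i] = X[i+q]` for all valid positions. The positivity requirement is stated
separately in the theorem. -/
def PeriodLen {α : Type*} (X : List α) (q : ℕ) : Prop :=
  ∀ i, (h : i + q < X.length) → X[i]'(by omega) = X[i + q]'h

namespace PeriodLen

variable {α : Type*} {X : List α} {a b g q : ℕ}

theorem getElem_mod (hq : PeriodLen X q) (i : ℕ) (hi : i < X.length) :
    X[i % q]'((Nat.mod_le i q).trans_lt hi) = X[i] := by
  obtain rfl | hq0 := q.eq_zero_or_pos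
  · simp
  induction i using Nat.strong_induction_on with
  | _ i ih =>
    by_cases hiq : i < q
    · simp only [Nat.mod_eq_of_lt hiq]
    obtain ⟨j, rfl⟩ : ∃ j, i = j + q := ⟨i - q, by omega⟩
    simp only [Nat.add_mod_right]
    exact (ih j (by omega) (by omega)).trans (hq j hi)

theorem getElem_eq_of_modEq (hq : PeriodLen X q) {i j : ℕ} (hi : i < X.length)
    (hj : j < X.length) (hij : i ≡ j [MOD q]) : X[i] = X[j] := by
  rw [← hq.getElem_mod i hi, ← hq.getElem_mod j hj]
  simp only [show i % q = j % q from hij]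

theorem take (hq : PeriodLen X q) (m : ℕ) : PeriodLen (X.take m) q := by
  intro i hi
  simp only [List.getElem_take]
  exact hq i (by simp only [List.length_take] at hi; omega)

theorem take_length_sub (ha : PeriodLen X a) (hb : PeriodLen X b) (hba : b ≤ a) :
    PeriodLen (X.take (X.length - b)) (a - b) := by
  intro i hi
  rw [List.length_take] at hi
  simp only [List.getElem_take]
  calc X[i] = X[i + a] := ha i (by omega)
    _ = X[i + (a - b) + b] := by congr 1; omega
    _ = X[i + (a - b)] := (hb _ (by omega)).symm

theorem of_take {m : ℕ} (hb : PeriodLen X b) (hb0 : 0 < b) (hbm : b ≤ m)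
    (hg : PeriodLen (X.take m) g) (hgb : g ∣ b) : PeriodLen X g := by
  intro i hi
  have hres : ∀ k < X.length, k % b < (X.take m).length := fun k hk => by
    have := Nat.mod_lt k hb0
    have := Nat.mod_le k b
    simp only [List.length_take]
    omega
  have hmod : i % b ≡ (i + g) % b [MOD g] := by
    simp only [Nat.ModEq, Nat.mod_mod_of_dvd _ hgb, Nat.add_mod_right]
  have hi' : i < X.length := by omega
  calc X[i] = X[i % b]'((Nat.mod_le _ _).trans_lt hi') := (hb.getElem_mod i hi').symm
    _ = (X.take m)[i % b]'(hres i hi') := List.getElem_take.symm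
    _ = (X.take m)[(i + g) % b]'(hres _ hi) := hg.getElem_eq_of_modEq _ _ hmod
    _ = X[(i + g) % b]'((Nat.mod_le _ _).trans_lt hi) := List.getElem_take
    _ = X[i + g] := hb.getElem_mod _ hi

theorem gcd_of_add_sub_gcd_le_length (ha : PeriodLen X a) (hb : PeriodLen X b)
    (hlen : a + b - a.gcd b ≤ X.length) : PeriodLen X (a.gcd b) := by
  induction hn : a + b using Nat.strong_induction_on generalizing X a b with
  | _ n ih =>
  wlog hba : b ≤ a generalizing a b
  · rw [Nat.gcd_comm] at hlen ⊢
    exact this hb ha (by omega) (by omega) (by omega)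
  obtain rfl | hb0 := b.eq_zero_or_pos
  · simpa using ha
  obtain rfl | hba := hba.eq_or_lt
  · simpa using ha
  have hgcd : (a - b).gcd b = a.gcd b := Nat.gcd_sub_self_left hba.le
  have hg_le : a.gcd b ≤ a - b := Nat.le_of_dvd (by omega) (hgcd ▸ Nat.gcd_dvd_left _ _)
  have hprefix := ih (a - b + b) (by omega) (ha.take_length_sub hb hba.le) (hb.take _)
    (by rw [hgcd, List.length_take]; omega) rfl
  rw [hgcd] at hprefix
  exact hb.of_take hb0 (by omega) hprefix (Nat.gcd_dvd_right a b)

end PeriodLen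

theorem fine_wilf_periodicity_general {α : Type*} (X : List α) (a b : ℕ)
    (hpa : PeriodLen X a) (hpb : PeriodLen X b)
    (hlen : a + b - Nat.gcd a b ≤ X.length) :
    PeriodLen X (Nat.gcd a b) :=
  hpa.gcd_of_add_sub_gcd_le_length hpb hlen

/-- **Fine–Wilf Periodicity Lemma.** If `a` and `b` are positive period lengths of `X`
and `|X| ≥ a + b − gcd(a,b)`, then `gcd(a,b)` is also a period length of `X`. -/
theorem fine_wilf_periodicity {α : Type*} (X : List α) (a b : ℕ)
    (ha : 0 < a) (hb : 0 < b)
    (hpa : PeriodLen X a) (hpb : PeriodLen X b)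
    (hlen : a + b - Nat.gcd a b ≤ X.length) :
    PeriodLen X (Nat.gcd a b) :=
  fine_wilf_periodicity_general X a b hpa hpb hlen
end

section
/- (Key claim in the proof of Theorem 4 of the paper.) Let S = p^k p' be a string of length n whose smallest period is p, where p' is a (possibly empty) proper prefix of p and k > 3. Then there is no nonempty string q with |q| < |p| such that q^{⌊n/|q|⌋ − 1} is a substring of S. -/
/-!
The occurrence of `q^{m-1}` (`m = ⌊n/|q|⌋`) in `S` is a window of length at least `|p| + |q|`,
because `n ≥ 4|p|`. It has period `|q|` and, as a factor of `S`, period `|p|`. Every residue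
class modulo `|p|` meets the window at a position `i` with `i + |q|` still inside it, so the
`|p|`-periodicity of `S` transports `S[i] = S[i + |q|]` to every position of `S`. Hence `|q|` is
a period of `S` shorter than the smallest one.
-/

/-- A string `p` is a period of a string `S` if `S = p^k p'` for some integer `k ≥ 1`
and some (possibly empty) prefix `p'` of `p`. -/
def IsPeriodOf {α : Type*} (p S : List α) : Prop :=
  ∃ k : ℕ, 1 ≤ k ∧ ∃ p' : List α, p' <+: p ∧ S = (List.replicate k p).flatten ++ p'

/-- `p` is a smallest period of `S`. -/
def SmallestPeriod {α : Type*} (p S : List α) : Prop :=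
  IsPeriodOf p S ∧ ∀ q : List α, IsPeriodOf q S → p.length ≤ q.length

theorem Nat.exists_lt_add_modEq {P : ℕ} (a x : ℕ) (hP : 0 < P) : ∃ w < P, a + w ≡ x [MOD P] := by
  refine ⟨(x + (P - 1) * a) % P, Nat.mod_lt _ hP, ?_⟩
  have hPa : a + (x + (P - 1) * a) = x + a * P := by
    obtain ⟨P, rfl⟩ := Nat.exists_eq_add_one.2 hP
    simp only [Nat.add_sub_cancel]
    ring
  calc a + (x + (P - 1) * a) % P ≡ a + (x + (P - 1) * a) [MOD P] :=
        (Nat.mod_modEq _ _).add_left a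
    _ = x + a * P := hPa
    _ ≡ x [MOD P] := Nat.add_mul_mod_self_right x a P

open List

section

variable {α : Type*}

namespace List

theorem HasPeriod.getElem?_eq_of_modEq {w : List α} {P i j : ℕ} (per : w.HasPeriod P)
    (hij : i ≡ j [MOD P]) (hi : i < w.length) (hj : j < w.length) : w[i]? = w[j]? := by
  rw [← per.getElem?_mod P i w hi, ← per.getElem?_mod P j w hj, show i % P = j % P from hij]

theorem HasPeriod.eq_of_take_eq {w w' : List α} {d : ℕ} (per : w.HasPeriod d)
    (per' : w'.HasPeriod d) (hd : 0 < d) (hlen : w.length = w'.length)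
    (htake : w.take d = w'.take d) : w = w' := by
  refine ext_getElem? fun i => ?_
  rcases lt_or_ge i w.length with hi | hi
  · rw [← per.getElem?_mod d i w hi, ← per'.getElem?_mod d i w' (hlen ▸ hi),
      ← getElem?_take_of_lt (Nat.mod_lt i hd), htake, getElem?_take_of_lt (Nat.mod_lt i hd)]
  · rw [getElem?_eq_none hi, getElem?_eq_none (hlen ▸ hi)]

theorem hasPeriod_flatten_replicate_append {p p' : List α} (hp' : p' <+: p) (k : ℕ) :
    ((replicate k p).flatten ++ p').HasPeriod p.length := by
  cases k with
  | zero => simpa using hasPeriod_of_length_le p' p.length hp'.length_le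
  | succ k =>
    have hcomm : p ++ (replicate k p).flatten = (replicate k p).flatten ++ p := by
      rw [← flatten_cons, ← replicate_succ, replicate_succ', flatten_append, flatten_singleton]
    rw [HasPeriod, replicate_succ, flatten_cons, append_assoc, take_left' rfl,
      prefix_append_right_inj, ← append_assoc, hcomm, append_assoc, prefix_append_right_inj]
    exact hp'.trans (prefix_append p p')

theorem HasPeriod.of_isInfix {S T : List α} {P d : ℕ} (perS : S.HasPeriod P)
    (perT : T.HasPeriod d) (hTS : T <:+: S) (hP : 0 < P) (hlen : P + d ≤ T.length) :
    S.HasPeriod d := by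
  obtain ⟨u, v, rfl⟩ := hTS
  have shift : ∀ j < T.length, (u ++ T ++ v)[u.length + j]? = T[j]? := fun j hj => by
    rw [append_assoc, getElem?_append_right (by omega), Nat.add_sub_cancel_left,
      getElem?_append_left hj]
  have hSlen : (u ++ T ++ v).length = u.length + T.length + v.length := by
    simp only [length_append]
  rw [hasPeriod_iff_getElem?] at perT ⊢
  intro x hx
  obtain ⟨w, hwP, hw⟩ := Nat.exists_lt_add_modEq u.length x hP
  calc (u ++ T ++ v)[x]? = (u ++ T ++ v)[u.length + w]? :=
        perS.getElem?_eq_of_modEq hw.symm (by omega) (by omega)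
    _ = T[w]? := shift w (by omega)
    _ = T[w + d]? := perT w (by omega)
    _ = (u ++ T ++ v)[u.length + (w + d)]? := (shift (w + d) (by omega)).symm
    _ = (u ++ T ++ v)[x + d]? :=
        perS.getElem?_eq_of_modEq (by rw [← add_assoc]; exact hw.add_right d) (by omega)
          (by omega)

theorem HasPeriod.isPeriodOf_take {S : List α} {d : ℕ} (per : S.HasPeriod d) (hd : 0 < d)
    (hdS : d ≤ S.length) : IsPeriodOf (S.take d) S := by
  have hT : (S.take d).length = d := length_take_of_le hdS
  have hm : 1 ≤ S.length / d := (Nat.one_le_div_iff hd).2 hdS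
  have hr : S.take (S.length % d) <+: S.take d := by
    simp [(Nat.mod_lt _ hd).le]
  refine ⟨S.length / d, hm, S.take (S.length % d), hr, ?_⟩
  have per' := hasPeriod_flatten_replicate_append hr (S.length / d)
  rw [hT] at per'
  refine per.eq_of_take_eq per' hd ?_ ?_
  · simp [hT, Nat.mod_le, Nat.div_add_mod']
  · obtain ⟨m, hm_eq⟩ := Nat.exists_eq_add_of_le' hm
    rw [hm_eq, replicate_succ, flatten_cons, append_assoc, take_left' hT]

end List

theorem IsPeriodOf.hasPeriod {p S : List α} (h : IsPeriodOf p S) : S.HasPeriod p.length := by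
  obtain ⟨k, -, p', hp', rfl⟩ := h
  exact hasPeriod_flatten_replicate_append hp' k

theorem SmallestPeriod.length_le_of_hasPeriod {p S : List α} {d : ℕ} (h : SmallestPeriod p S)
    (per : S.HasPeriod d) (hd : 0 < d) (hdS : d ≤ S.length) : p.length ≤ d := by
  simpa [hdS] using h.2 _ (per.isPeriodOf_take hd hdS)

end

theorem no_short_candidate_period_general {α : Type*} (p p' S : List α) (k : ℕ)
    (hk : 3 < k)
    (hS : S = (List.replicate k p).flatten ++ p')
    (hsmall : SmallestPeriod p S) :
    ¬ ∃ q : List α, q ≠ [] ∧ q.length < p.length ∧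
        (List.replicate (S.length / q.length - 1) q).flatten <:+: S := by
  rintro ⟨q, hq, hqp, hwindow⟩
  have hq0 : 0 < q.length := length_pos_iff.2 hq
  have hn : 4 * p.length ≤ S.length := by
    have : 4 * p.length ≤ k * p.length := Nat.mul_le_mul_right _ hk
    simp only [hS, length_append, length_flatten, map_replicate, sum_replicate, smul_eq_mul]
    omega
  have hwindow_len : p.length + q.length ≤ (S.length / q.length - 1) * q.length := by
    have := Nat.lt_div_mul_add (a := S.length) hq0
    rw [Nat.sub_one_mul]
    omega
  have perW : ((replicate (S.length / q.length - 1) q).flatten).HasPeriod q.length := by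
    simpa using hasPeriod_flatten_replicate_append (nil_prefix (l := q)) _
  have perS : S.HasPeriod q.length :=
    hsmall.1.hasPeriod.of_isInfix perW hwindow (by omega) (by simpa using hwindow_len)
  have := hsmall.length_le_of_hasPeriod perS hq0 (by omega)
  omega

/-- **Key claim in the proof of Theorem 4.** If `S = p^k p'` has smallest period `p`,
with `p'` a proper prefix of `p` and `k > 3`, then there is no nonempty string `q`
with `|q| < |p|` such that `q^{⌊n/|q|⌋ − 1}` is a substring of `S`, where `n = |S|`. -/
theorem no_short_candidate_period {α : Type*} (p p' S : List α) (k : ℕ)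
    (hk : 3 < k) (hp' : p' <+: p) (hproper : p'.length < p.length)
    (hS : S = (List.replicate k p).flatten ++ p')
    (hsmall : SmallestPeriod p S) :
    ¬ ∃ q : List α, q ≠ [] ∧ q.length < p.length ∧
        (List.replicate (S.length / q.length - 1) q).flatten <:+: S :=
  no_short_candidate_period_general p p' S k hk hS hsmall
end

section
/- (Lemma 7 of the paper.) Let p be a nonempty string, let S' = p^k p' with k ≥ 1 and p' a (possibly empty) prefix of p, and let S be a string with |S| = |S'| and Hamming distance δ(S, S') ≤ d. Let A be any substring of S of length (2d+1)|p|, written as the concatenation A = q₁ q₂ ⋯ q_{2d+1} of consecutive blocks each of length |p|. Then there is exactly one string that occurs at least d+1 times among q₁, …, q_{2d+1}, and this string is a cyclic rotation of p. -/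
/-- Hamming distance between two strings of equal length: the number of positions at
which they differ. -/
def listHammingDist {α : Type*} [DecidableEq α] (X Y : List α) : ℕ :=
  ((X.zip Y).filter (fun ab => decide (ab.1 ≠ ab.2))).length

/-- The `i`-th consecutive block of length `m` of a string `A` (0-indexed). -/
def blockAt {α : Type*} (A : List α) (m i : ℕ) : List α :=
  (A.drop (i * m)).take m

/-! The window `A'` of `S'` at the position of `A` lies inside `p^(k+1)`, so all its blocks
equal one rotation `w` of `p`, and `δ(A, A') ≤ δ(S, S') ≤ d`. A block of `A` other than `w`
differs from the corresponding block of `A'`, so at most `d` of the `2d+1` blocks differ from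
`w`: hence `w` occurs at least `d+1` times and every other string at most `d` times. -/

lemma blockAt_succ {α : Type*} (A : List α) (m i : ℕ) :
    blockAt A m (i + 1) = blockAt (A.drop m) m i := by
  rw [blockAt, blockAt, List.drop_drop, Nat.succ_mul, Nat.add_comm]

section Hamming

variable {α : Type*} [DecidableEq α]

lemma listHammingDist_append {X X' : List α} (Y Y' : List α) (h : X.length = X'.length) :
    listHammingDist (X ++ Y) (X' ++ Y') = listHammingDist X X' + listHammingDist Y Y' := by
  simp only [listHammingDist, List.zip_append h, List.filter_append, List.length_append]

lemma one_le_listHammingDist {X Y : List α} (h : X.length = Y.length) (hne : X ≠ Y) :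
    1 ≤ listHammingDist X Y := by
  induction X generalizing Y with
  | nil => cases Y <;> simp_all
  | cons a X ih =>
    cases Y with
    | nil => simp at h
    | cons b Y =>
      have hXY := listHammingDist_append X Y (X := [a]) (X' := [b]) rfl
      simp only [List.cons_append, List.nil_append] at hXY
      rw [hXY]
      by_cases hab : a = b
      · subst hab
        exact (ih (by simpa using h) (by simpa using hne)).trans (Nat.le_add_left _ _)
      · simp [listHammingDist, hab]

lemma listHammingDist_drop_take_le (u A v Y : List α) (h : (u ++ A ++ v).length = Y.length) :
    listHammingDist A ((Y.drop u.length).take A.length) ≤ listHammingDist (u ++ A ++ v) Y := by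
  simp only [List.length_append] at h
  have hu := listHammingDist_append (A ++ v) (Y.drop u.length) (X := u) (X' := Y.take u.length)
    (by simp; omega)
  have hA := listHammingDist_append v ((Y.drop u.length).drop A.length) (X := A)
    (X' := (Y.drop u.length).take A.length) (by simp; omega)
  rw [List.take_append_drop] at hu hA
  rw [List.append_assoc, hu, hA]
  omega

lemma countP_blockAt_ne_le_listHammingDist {A B : List α} (h : A.length = B.length) (m n : ℕ) :
    (List.range n).countP (fun i => blockAt A m i ≠ blockAt B m i) ≤ listHammingDist A B := by
  induction n generalizing A B with
  | zero => simp
  | succ n ih =>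
    have hsplit := listHammingDist_append (A.drop m) (B.drop m)
      (X := A.take m) (X' := B.take m) (by simp [h])
    rw [List.take_append_drop, List.take_append_drop] at hsplit
    have hrest := ih (A := A.drop m) (B := B.drop m) (by simp [h])
    rw [List.range_succ_eq_map, List.countP_cons, List.countP_map, hsplit]
    simp only [Function.comp_def, blockAt_succ]
    split_ifs with hne
    · have := one_le_listHammingDist (X := A.take m) (Y := B.take m) (by simp [h])
        (by simpa [blockAt] using hne)
      omega
    · omega

end Hamming

section Periodic

variable {α : Type*}

lemma getElem?_flatten_replicate (p : List α) {N i : ℕ} (hi : i < N * p.length) :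
    (List.replicate N p).flatten[i]? = p[i % p.length]? := by
  induction N generalizing i with
  | zero => simp at hi
  | succ N ih =>
    rw [List.replicate_succ, List.flatten_cons]
    by_cases hip : i < p.length
    · rw [List.getElem?_append_left hip, Nat.mod_eq_of_lt hip]
    · push Not at hip
      rw [List.getElem?_append_right hip, ih (by rw [Nat.succ_mul] at hi; omega),
        ← Nat.mod_eq_sub_mod hip]

lemma blockAt_drop_take_of_prefix {p X : List α} {N : ℕ}
    (hX : X <+: (List.replicate N p).flatten) {t L i : ℕ} (htL : t + L ≤ X.length)
    (hi : (i + 1) * p.length ≤ L) :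
    blockAt ((X.drop t).take L) p.length i = p.rotate (t % p.length) := by
  have hXN : X.length ≤ N * p.length := by simpa using hX.length_le
  obtain ⟨r, hr⟩ := hX
  apply List.ext_getElem?
  intro j
  by_cases hj : j < p.length
  · have hjL : i * p.length + j < L := by rw [Nat.succ_mul] at hi; omega
    rw [blockAt, List.getElem?_take, if_pos hj, List.getElem?_drop, List.getElem?_take,
      if_pos hjL, List.getElem?_drop, ← List.getElem?_append_left (l₂ := r) (by omega), hr,
      getElem?_flatten_replicate p (by omega), List.getElem?_rotate (by omega),
      Nat.add_mod_mod, show t + (i * p.length + j) = j + t + i * p.length by ring,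
      Nat.add_mul_mod_self_right]
  · rw [blockAt, List.getElem?_take, if_neg hj, List.getElem?_eq_none (by simp; omega)]

end Periodic

section Majority

variable {β γ : Type*} [DecidableEq γ]

lemma le_countP_eq_of_countP_ne_le {l : List β} {f : β → γ} {w : γ} {d : ℕ}
    (hl : l.length = 2 * d + 1) (h : l.countP (fun x => f x ≠ w) ≤ d) :
    d + 1 ≤ l.countP (fun x => f x = w) := by
  have := List.length_eq_countP_add_countP (fun x => decide (f x = w)) (l := l)
  simp only [decide_eq_true_eq, decide_not] at this h
  omega

lemma eq_of_countP_ne_le {l : List β} {f : β → γ} {w w' : γ} {d : ℕ}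
    (h : l.countP (fun x => f x ≠ w) ≤ d) (h' : d + 1 ≤ l.countP (fun x => f x = w')) :
    w' = w := by
  by_contra hne
  have : l.countP (fun x => f x = w') ≤ l.countP (fun x => f x ≠ w) :=
    List.countP_mono_left fun x _ hx => by simp_all
  omega

end Majority

theorem corrupted_majority_block_general {α : Type*} [DecidableEq α]
    (p p' S S' A : List α) (k d : ℕ)
    (hp : p ≠ []) (hp' : p' <+: p)
    (hS' : S' = (List.replicate k p).flatten ++ p')
    (hlen : S.length = S'.length)
    (hdist : listHammingDist S S' ≤ d)
    (hA : A <:+: S) (hAlen : A.length = (2 * d + 1) * p.length) :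
    ∃ w : List α, (∃ j < p.length, w = p.rotate j) ∧
      d + 1 ≤ (List.range (2 * d + 1)).countP
          (fun i => decide (blockAt A p.length i = w)) ∧
      ∀ w' : List α,
        d + 1 ≤ (List.range (2 * d + 1)).countP
            (fun i => decide (blockAt A p.length i = w')) → w' = w := by
  obtain ⟨u, v, rfl⟩ := hA
  have hS'_prefix : S' <+: (List.replicate (k + 1) p).flatten := by
    rw [hS', List.replicate_succ', List.flatten_append, List.flatten_singleton]
    exact (List.prefix_append_right_inj _).mpr hp'
  have hA_fits : u.length + A.length ≤ S'.length := by
    simp only [List.length_append] at hlen; omega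
  set A' := (S'.drop u.length).take A.length
  have hA'_len : A'.length = A.length := by
    simp only [A', List.length_take, List.length_drop]; omega
  set w := p.rotate (u.length % p.length)
  have hA'_blocks : ∀ i < 2 * d + 1, blockAt A' p.length i = w := fun i hi =>
    blockAt_drop_take_of_prefix hS'_prefix hA_fits (hAlen ▸ Nat.mul_le_mul_right _ hi)
  have hbad : (List.range (2 * d + 1)).countP (fun i => blockAt A p.length i ≠ w) ≤ d :=
    calc _ = (List.range (2 * d + 1)).countP
            (fun i => blockAt A p.length i ≠ blockAt A' p.length i) :=
          List.countP_congr fun i hi => by rw [hA'_blocks i (List.mem_range.mp hi)]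
      _ ≤ listHammingDist A A' := countP_blockAt_ne_le_listHammingDist hA'_len.symm _ _
      _ ≤ listHammingDist (u ++ A ++ v) S' := listHammingDist_drop_take_le u A v S' hlen
      _ ≤ d := hdist
  exact ⟨w, ⟨_, Nat.mod_lt _ (List.length_pos_iff.mpr hp), rfl⟩,
    le_countP_eq_of_countP_ne_le (by simp) hbad, fun _ hw' => eq_of_countP_ne_le hbad hw'⟩

/-- **Lemma 7.** Let `S' = p^k p'` with `k ≥ 1` and `p'` a prefix of the nonempty
string `p`, and let `S` satisfy `|S| = |S'|` and `δ(S, S') ≤ d`. Let `A` be any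
substring of `S` of length `(2d+1)|p|`, viewed as the concatenation of `2d+1`
consecutive blocks of length `|p|`. Then there is exactly one string occurring at
least `d+1` times among the blocks, and it is a cyclic rotation of `p`. -/
theorem corrupted_majority_block {α : Type*} [DecidableEq α]
    (p p' S S' A : List α) (k d : ℕ)
    (hp : p ≠ []) (hk : 1 ≤ k) (hp' : p' <+: p)
    (hS' : S' = (List.replicate k p).flatten ++ p')
    (hlen : S.length = S'.length)
    (hdist : listHammingDist S S' ≤ d)
    (hA : A <:+: S) (hAlen : A.length = (2 * d + 1) * p.length) :
    ∃ w : List α, (∃ j < p.length, w = p.rotate j) ∧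
      d + 1 ≤ (List.range (2 * d + 1)).countP
          (fun i => decide (blockAt A p.length i = w)) ∧
      ∀ w' : List α,
        d + 1 ≤ (List.range (2 * d + 1)).countP
            (fun i => decide (blockAt A p.length i = w')) → w' = w :=
  corrupted_majority_block_general p p' S S' A k d hp hp' hS' hlen hdist hA hAlen
end

section
/- (Theorem 13 of the paper.) For every integer b ≥ 1, consider the two binary strings of length n = 4b + 14 given by S₁ = 101101·(10)^b·01·(10)^b·010010 and S₂ = 101101·(10)^b·10·(10)^b·010010. For all natural numbers k and l, let Mᵢ(k,l) be the set of starting positions j (1 ≤ j ≤ n − (k+l) + 1) such that the length-(k+l) substring of Sᵢ starting at position j contains exactly k ones and l zeros. Then for every pair (k,l), either M₁(k,l) and M₂(k,l) are both empty, or M₁(k,l) ∩ M₂(k,l) is nonempty. (Hence S₁ and S₂ cannot be distinguished by adversarial jumbled-indexing queries.) -/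
/-!
The strings `S₁ b` and `S₂ b` differ by swapping the letters at positions `6 + 2b` and `7 + 2b`
(0-indexed), so their prefix counts of ones agree except at the cut `7 + 2b`, and a substring
neither of whose endpoints is the cut has the same Parikh vector in both strings. For every
substring of either string ending at the cut, a substring with the same length and number of ones
avoiding the cut is given explicitly. Substrings starting at the cut reduce to these: both strings
are fixed by reversal followed by complementation, which swaps ones and zeros, fixes the cut and
sends substrings starting there to substrings ending there.
-/

/-- The first string of Theorem 13: `S₁ = 101101·(10)^b·01·(10)^b·010010`,
with `true` playing the role of `1` and `false` the role of `0`. -/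
def S₁ (b : ℕ) : List Bool :=
  [true, false, true, true, false, true] ++ (List.replicate b [true, false]).flatten ++
    [false, true] ++ (List.replicate b [true, false]).flatten ++
    [false, true, false, false, true, false]

/-- The second string of Theorem 13: `S₂ = 101101·(10)^b·10·(10)^b·010010`. -/
def S₂ (b : ℕ) : List Bool :=
  [true, false, true, true, false, true] ++ (List.replicate b [true, false]).flatten ++
    [true, false] ++ (List.replicate b [true, false]).flatten ++
    [false, true, false, false, true, false]

/-- `M S k l` is the set of (0-indexed) starting positions `j` such that the
length-`(k+l)` substring of `S` starting at position `j` contains exactly `k` ones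
and `l` zeros. -/
def M (S : List Bool) (k l : ℕ) : Set ℕ :=
  {j | j + (k + l) ≤ S.length ∧
    ((S.drop j).take (k + l)).count true = k ∧
    ((S.drop j).take (k + l)).count false = l}

def prefixOnes (S : List Bool) (x : ℕ) : ℕ := (S.take x).count true

theorem prefixOnes_add (S : List Bool) (x m : ℕ) :
    prefixOnes S (x + m) = prefixOnes S x + ((S.drop x).take m).count true := by
  rw [prefixOnes, prefixOnes, List.take_add, List.count_append]

theorem prefixOnes_mono (S : List Bool) {x y : ℕ} (h : x ≤ y) :
    prefixOnes S x ≤ prefixOnes S y :=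
  (List.take_sublist_take_left h).count_le true

theorem mem_M_iff {S : List Bool} {k l j : ℕ} :
    j ∈ M S k l ↔
      j + (k + l) ≤ S.length ∧ prefixOnes S (j + (k + l)) = prefixOnes S j + k := by
  have hcount := List.count_true_add_count_false ((S.drop j).take (k + l))
  simp only [M, Set.mem_ofPred_eq, prefixOnes_add, List.length_take, List.length_drop] at hcount ⊢
  constructor
  · rintro ⟨h, hk, -⟩
    exact ⟨h, by omega⟩
  · rintro ⟨h, hk⟩
    exact ⟨h, by omega, by omega⟩

theorem count_true_map_not (l : List Bool) : (l.map not).count true = l.count false :=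
  l.count_map_of_injective not Bool.not_injective false

theorem count_true_eq_count_false_of_reverse_eq_map_not {S : List Bool}
    (hS : S.reverse = S.map not) :
    S.count true = S.count false := by
  rw [← List.count_reverse, hS, count_true_map_not]

theorem prefixOnes_length_sub_add {S : List Bool} (hS : S.reverse = S.map not) {x : ℕ}
    (hx : x ≤ S.length) :
    prefixOnes S (S.length - x) + x = prefixOnes S x + S.count true := by
  have hsuffix : (S.drop (S.length - x)).count true = (S.take x).count false := by
    rw [← List.count_reverse, ← List.take_reverse, hS, ← List.map_take, count_true_map_not]
  have htotal := List.count_append (a := true) (l₁ := S.take (S.length - x))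
    (l₂ := S.drop (S.length - x))
  have hprefix := List.count_true_add_count_false (S.take x)
  rw [List.take_append_drop] at htotal
  rw [List.length_take_of_le hx] at hprefix
  unfold prefixOnes
  omega

theorem count_true_take_flatten_replicate (b i : ℕ) :
    (((List.replicate b [true, false]).flatten).take i).count true = min ((i + 1) / 2) b := by
  induction b generalizing i with
  | zero => simp
  | succ b ih =>
    rcases i with _ | _ | i
    · simp
    · simp [List.replicate_succ]
    · simp [List.replicate_succ, ih i]; omega

theorem length_flatten_replicate_pair (b : ℕ) :
    ((List.replicate b [true, false]).flatten).length = 2 * b := by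
  simp; ring

theorem count_true_take_101101 (x : ℕ) :
    (([true, false, true, true, false, true] : List Bool).take x).count true
      = min x 1 + min (x - 2) 2 + min (x - 5) 1 := by
  rcases x with _ | _ | _ | _ | _ | _ | x <;> simp

theorem count_true_take_010010 (x : ℕ) :
    (([false, true, false, false, true, false] : List Bool).take x).count true
      = min (x - 1) 1 + min (x - 4) 1 := by
  rcases x with _ | _ | _ | _ | _ | _ | x <;> simp

theorem count_true_take_01 (x : ℕ) :
    (([false, true] : List Bool).take x).count true = min (x - 1) 1 := by
  rcases x with _ | _ | _ | x <;> simp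

theorem count_true_take_10 (x : ℕ) :
    (([true, false] : List Bool).take x).count true = min x 1 := by
  rcases x with _ | _ | x <;> simp

theorem length_S₁ (b : ℕ) : (S₁ b).length = 4 * b + 14 := by
  simp [S₁]; ring

theorem length_S₂ (b : ℕ) : (S₂ b).length = 4 * b + 14 := by
  simp [S₂]; ring

theorem reverse_S₂ (b : ℕ) : (S₂ b).reverse = (S₂ b).map not := by
  simp [S₂, List.reverse_flatten]

section PrefixOnesS₂

variable {b x : ℕ}

theorem prefixOnes_S₂_of_le (hx : x ≤ 7 + 2 * b) :
    prefixOnes (S₂ b) x = min x 1 + min (x - 2) 2 + min (x - 5) 1 + (x - 5) / 2 := by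
  rw [prefixOnes, S₂, List.take_append_of_le_length (by simp; omega),
    List.take_append_of_le_length (by simp; omega)]
  simp only [List.take_append, List.count_append, List.length_append, List.length_cons,
    List.length_nil, Nat.reduceAdd, length_flatten_replicate_pair, count_true_take_101101,
    count_true_take_10, count_true_take_flatten_replicate]
  omega

theorem prefixOnes_S₂_reflect (hx : x ≤ 4 * b + 14) :
    prefixOnes (S₂ b) (4 * b + 14 - x) + x = prefixOnes (S₂ b) x + (2 * b + 7) := by
  have hhalf := count_true_eq_count_false_of_reverse_eq_map_not (reverse_S₂ b)
  have hlen := List.count_true_add_count_false (S₂ b)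
  have := prefixOnes_length_sub_add (reverse_S₂ b) (x := x)
  rw [length_S₂] at this hlen
  omega

theorem prefixOnes_S₂_of_mem_Icc (h6 : 6 ≤ x) (hx : x ≤ 8 + 4 * b) :
    prefixOnes (S₂ b) x = (x + 3) / 2 := by
  rcases le_or_gt x (7 + 2 * b) with hlow | hhigh
  · rw [prefixOnes_S₂_of_le hlow]; omega
  · have := prefixOnes_S₂_reflect (b := b) (x := 4 * b + 14 - x) (by omega)
    rw [Nat.sub_sub_self (by omega), prefixOnes_S₂_of_le (x := 4 * b + 14 - x) (by omega)] at this
    omega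

theorem prefixOnes_S₂_cut : prefixOnes (S₂ b) (7 + 2 * b) = b + 5 := by
  rw [prefixOnes_S₂_of_mem_Icc (by omega) (by omega)]; omega

theorem prefixOnes_S₂_le_of_lt_cut (hx : x < 7 + 2 * b) : prefixOnes (S₂ b) x ≤ b + 4 := by
  have := prefixOnes_mono (S₂ b) (show x ≤ 6 + 2 * b by omega)
  rw [prefixOnes_S₂_of_mem_Icc (x := 6 + 2 * b) (by omega) (by omega)] at this
  omega

theorem prefixOnes_S₂_nine_add : prefixOnes (S₂ b) (9 + 4 * b) = 2 * b + 5 := by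
  have := prefixOnes_S₂_reflect (b := b) (x := 5) (by omega)
  rw [show 4 * b + 14 - 5 = 9 + 4 * b by omega, prefixOnes_S₂_of_le (x := 5) (by omega)] at this
  omega

end PrefixOnesS₂

theorem prefixOnes_S₁_of_ne {b x : ℕ} (hx : x ≠ 7 + 2 * b) :
    prefixOnes (S₁ b) x = prefixOnes (S₂ b) x := by
  simp only [prefixOnes, S₁, S₂, List.take_append, List.count_append, List.length_append,
    List.length_cons, List.length_nil, Nat.reduceAdd, length_flatten_replicate_pair,
    count_true_take_101101, count_true_take_10, count_true_take_01,
    count_true_take_flatten_replicate, count_true_take_010010]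
  omega

theorem prefixOnes_S₁_cut (b : ℕ) : prefixOnes (S₁ b) (7 + 2 * b) = b + 4 := by
  rw [prefixOnes, S₁, List.take_append_of_le_length (by simp; omega),
    List.take_append_of_le_length (by simp; omega)]
  simp only [List.take_append, List.count_append, List.length_append, List.length_cons,
    List.length_nil, Nat.reduceAdd, length_flatten_replicate_pair, count_true_take_101101,
    count_true_take_01, count_true_take_flatten_replicate]
  omega

def IsSafeWindow (b m w c : ℕ) : Prop :=
  c + m ≤ 4 * b + 14 ∧ c ≠ 7 + 2 * b ∧ c + m ≠ 7 + 2 * b ∧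
    prefixOnes (S₂ b) (c + m) = prefixOnes (S₂ b) c + w

theorem IsSafeWindow.reflect {b m w c : ℕ} (h : IsSafeWindow b m w c) :
    IsSafeWindow b m (m - w) (4 * b + 14 - c - m) := by
  obtain ⟨hlen, hc, hcm, hw⟩ := h
  have h₁ := prefixOnes_S₂_reflect (b := b) (x := c) (by omega)
  have h₂ := prefixOnes_S₂_reflect (b := b) (x := c + m) hlen
  have hmono := prefixOnes_mono (S₂ b) (Nat.le_add_right (4 * b + 14 - c - m) m)
  refine ⟨by omega, by omega, by omega, ?_⟩
  rw [show 4 * b + 14 - c - m + m = 4 * b + 14 - c by omega] at hmono ⊢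
  rw [show 4 * b + 14 - c - m = 4 * b + 14 - (c + m) by omega] at hmono ⊢
  omega

theorem exists_isSafeWindow_of_sub {b m w : ℕ} (hw : w ≤ m)
    (h : ∃ c, IsSafeWindow b m (m - w) c) : ∃ c, IsSafeWindow b m w c := by
  obtain ⟨c, hc⟩ := h
  exact ⟨_, by simpa only [Nat.sub_sub_self hw] using hc.reflect⟩

theorem IsSafeWindow.mem_inter {b k l c : ℕ} (h : IsSafeWindow b (k + l) k c) :
    c ∈ M (S₁ b) k l ∩ M (S₂ b) k l := by
  obtain ⟨hlen, hc, hcm, hw⟩ := h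
  refine ⟨mem_M_iff.2 ⟨?_, ?_⟩, mem_M_iff.2 ⟨?_, hw⟩⟩
  · rwa [length_S₁]
  · rwa [prefixOnes_S₁_of_ne hc, prefixOnes_S₁_of_ne hcm]
  · rwa [length_S₂]

theorem exists_isSafeWindow_end₁ {b j m : ℕ} (hb : 1 ≤ b) (hm : 1 ≤ m)
    (hjm : j + m = 7 + 2 * b) :
    ∃ c, IsSafeWindow b m (b + 4 - prefixOnes (S₂ b) j) c := by
  rcases le_or_gt m (2 * b + 1) with hm₁ | hm₁
  · refine ⟨9 + 4 * b - m, by omega, by omega, by omega, ?_⟩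
    rw [Nat.sub_add_cancel (by omega), prefixOnes_S₂_nine_add,
      prefixOnes_S₂_of_mem_Icc (by omega) (by omega),
      prefixOnes_S₂_of_mem_Icc (by omega) (by omega)]
    omega
  · refine ⟨10 + 2 * b - m, by omega, by omega, by omega, ?_⟩
    rw [Nat.sub_add_cancel (by omega), prefixOnes_S₂_of_mem_Icc (by omega) (by omega),
      prefixOnes_S₂_of_le (x := 10 + 2 * b - m) (by omega),
      prefixOnes_S₂_of_le (x := j) (by omega)]
    omega

theorem exists_isSafeWindow_end₂ {b j m : ℕ} (hb : 1 ≤ b) (hm : 1 ≤ m)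
    (hjm : j + m = 7 + 2 * b) :
    ∃ c, IsSafeWindow b m (b + 5 - prefixOnes (S₂ b) j) c := by
  rcases le_or_gt m (2 * b) with hm₁ | hm₁
  · refine ⟨6, by omega, by omega, by omega, ?_⟩
    rw [prefixOnes_S₂_of_mem_Icc (by omega) (by omega),
      prefixOnes_S₂_of_mem_Icc (by omega) (by omega),
      prefixOnes_S₂_of_mem_Icc (by omega) (by omega)]
    omega
  rw [prefixOnes_S₂_of_le (x := j) (by omega)]
  rcases le_or_gt m (2 * b + 4) with hm₂ | hm₂
  · refine ⟨4 + 2 * b - m, by omega, by omega, by omega, ?_⟩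
    rw [Nat.sub_add_cancel (by omega), prefixOnes_S₂_of_mem_Icc (by omega) (by omega),
      prefixOnes_S₂_of_le (x := 4 + 2 * b - m) (by omega)]
    omega
  rcases le_or_gt m (2 * b + 6) with hm₃ | hm₃
  · refine ⟨0, by omega, by omega, by omega, ?_⟩
    rw [zero_add, prefixOnes_S₂_of_mem_Icc (by omega) (by omega),
      prefixOnes_S₂_of_le (x := 0) (by omega)]
    omega
  · refine ⟨2, by omega, by omega, by omega, ?_⟩
    rw [prefixOnes_S₂_of_mem_Icc (by omega) (by omega), prefixOnes_S₂_of_le (x := 2) (by omega)]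
    omega

theorem exists_isSafeWindow_of_S₁ {b j m w : ℕ} (hb : 1 ≤ b) (hjm : j + m ≤ 4 * b + 14)
    (h : prefixOnes (S₁ b) (j + m) = prefixOnes (S₁ b) j + w) :
    ∃ c, IsSafeWindow b m w c := by
  rcases Nat.eq_zero_or_pos m with rfl | hm
  · exact ⟨0, by omega, by omega, by omega, by simpa using h⟩
  by_cases hend : j + m = 7 + 2 * b
  · rw [hend, prefixOnes_S₁_cut, prefixOnes_S₁_of_ne (by omega)] at h
    rw [show w = b + 4 - prefixOnes (S₂ b) j by omega]
    exact exists_isSafeWindow_end₁ hb hm hend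
  by_cases hstart : j = 7 + 2 * b
  · subst hstart
    rw [prefixOnes_S₁_cut, prefixOnes_S₁_of_ne hend] at h
    have hrefl := prefixOnes_S₂_reflect (b := b) (x := 7 + 2 * b - m) (by omega)
    rw [show 4 * b + 14 - (7 + 2 * b - m) = 7 + 2 * b + m by omega] at hrefl
    have hle := prefixOnes_S₂_le_of_lt_cut (b := b) (x := 7 + 2 * b - m) (by omega)
    refine exists_isSafeWindow_of_sub (by omega) ?_
    rw [show m - w = b + 4 - prefixOnes (S₂ b) (7 + 2 * b - m) by omega]
    exact exists_isSafeWindow_end₁ hb hm (by omega)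
  rw [prefixOnes_S₁_of_ne hstart, prefixOnes_S₁_of_ne hend] at h
  exact ⟨j, hjm, hstart, hend, h⟩

theorem exists_isSafeWindow_of_S₂ {b j m w : ℕ} (hb : 1 ≤ b) (hjm : j + m ≤ 4 * b + 14)
    (h : prefixOnes (S₂ b) (j + m) = prefixOnes (S₂ b) j + w) :
    ∃ c, IsSafeWindow b m w c := by
  rcases Nat.eq_zero_or_pos m with rfl | hm
  · exact ⟨0, by omega, by omega, by omega, by simpa using h⟩
  by_cases hend : j + m = 7 + 2 * b
  · rw [hend, prefixOnes_S₂_cut] at h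
    rw [show w = b + 5 - prefixOnes (S₂ b) j by omega]
    exact exists_isSafeWindow_end₂ hb hm hend
  by_cases hstart : j = 7 + 2 * b
  · subst hstart
    rw [prefixOnes_S₂_cut] at h
    have hrefl := prefixOnes_S₂_reflect (b := b) (x := 7 + 2 * b - m) (by omega)
    rw [show 4 * b + 14 - (7 + 2 * b - m) = 7 + 2 * b + m by omega] at hrefl
    have hle := prefixOnes_S₂_le_of_lt_cut (b := b) (x := 7 + 2 * b - m) (by omega)
    refine exists_isSafeWindow_of_sub (by omega) ?_
    rw [show m - w = b + 5 - prefixOnes (S₂ b) (7 + 2 * b - m) by omega]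
    exact exists_isSafeWindow_end₂ hb hm (by omega)
  exact ⟨j, hjm, hstart, hend, h⟩

/-- **Theorem 13.** For every `b ≥ 1` and every Parikh vector `(k,l)`, either both
`S₁` and `S₂` have no substring with `k` ones and `l` zeros, or they have a common
starting position of such a substring. Hence `S₁` and `S₂` cannot be distinguished
by adversarial jumbled-indexing queries. -/
theorem aji_indistinguishable (b : ℕ) (hb : 1 ≤ b) (k l : ℕ) :
    (M (S₁ b) k l = ∅ ∧ M (S₂ b) k l = ∅) ∨ (M (S₁ b) k l ∩ M (S₂ b) k l).Nonempty := by
  rcases (M (S₁ b) k l).eq_empty_or_nonempty with h₁ | ⟨j, hj⟩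
  · rcases (M (S₂ b) k l).eq_empty_or_nonempty with h₂ | ⟨j, hj⟩
    · exact Or.inl ⟨h₁, h₂⟩
    · rw [mem_M_iff, length_S₂] at hj
      obtain ⟨c, hc⟩ := exists_isSafeWindow_of_S₂ hb hj.1 hj.2
      exact Or.inr ⟨c, hc.mem_inter⟩
  · rw [mem_M_iff, length_S₁] at hj
    obtain ⟨c, hc⟩ := exists_isSafeWindow_of_S₁ hb hj.1 hj.2
    exact Or.inr ⟨c, hc.mem_inter⟩
end
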